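/- arXiv:1308.5782 — 2 statements merged into one kernel-verified Lean document; each statement's English description precedes it below -/
import Mathlib

section
/- The summatory function of the divisor function satisfies ∑_{n≤x} d(n) = x log x + (2γ - 1)x + O(x^{1/2}) as x → ∞, where γ is Euler's constant. -/
/-! Dirichlet's hyperbola method. `∑_{n ≤ N} d(n)` counts the lattice points `(a, b)` with
`ab ≤ N`. Each of them has `a ≤ K` or `b ≤ K`, where `K = ⌊√N⌋`, and those with both form a
`K × K` square, so `∑_{n ≤ N} d(n) = 2 ∑_{a ≤ K} ⌊N / a⌋ - K²`. Dropping the floors costs `O(K)`,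
and `H_K = log K + γ + O(1 / K)`, so the sum is `2N log K + 2γN - K² + O(√N)`, which is
`N log N + (2γ - 1)N + O(√N)` because `K² = N + O(√N)`. Passing from `N = ⌊x⌋` to `x` costs
`O(log x)`. -/

open Filter Asymptotics Finset Real

namespace Nat

lemma card_filter_mul_le (N a : ℕ) (ha : 0 < a) : #{b ∈ Icc 1 N | a * b ≤ N} = N / a := by
  rw [show {b ∈ Icc 1 N | a * b ≤ N} = Icc 1 (N / a) by
    ext b
    simp only [mem_filter, mem_Icc, Nat.le_div_iff_mul_le ha, mul_comm b a]
    exact ⟨fun h => ⟨h.1.1, h.2⟩, fun h => ⟨⟨h.1, (Nat.le_mul_of_pos_left b ha).trans h.2⟩, h.2⟩⟩]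
  simp

lemma card_filter_mul_le_and_fst_le (N K : ℕ) (hK : K ≤ N) :
    #{p ∈ Icc 1 N ×ˢ Icc 1 N | p.1 * p.2 ≤ N ∧ p.1 ≤ K} = ∑ a ∈ Icc 1 K, N / a := by
  have hIcc : Icc 1 K = {a ∈ Icc 1 N | a ≤ K} := by
    ext a; simp only [mem_filter, mem_Icc]; omega
  rw [hIcc, sum_filter, card_filter, sum_product]
  refine sum_congr rfl fun a ha => ?_
  split_ifs with haK
  · simp_rw [haK, and_true, ← card_filter]
    exact card_filter_mul_le N a (mem_Icc.1 ha).1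
  · simp [haK]

lemma card_filter_mul_le_and_snd_le (N K : ℕ) (hK : K ≤ N) :
    #{p ∈ Icc 1 N ×ˢ Icc 1 N | p.1 * p.2 ≤ N ∧ p.2 ≤ K} = ∑ a ∈ Icc 1 K, N / a := by
  rw [← card_filter_mul_le_and_fst_le N K hK]
  exact card_equiv (Equiv.prodComm ℕ ℕ) fun p => by simp [mul_comm p.1, and_comm]

lemma sum_card_divisors_eq_card_filter_mul_le (N : ℕ) :
    ∑ n ∈ Icc 1 N, #n.divisors = #{p ∈ Icc 1 N ×ˢ Icc 1 N | p.1 * p.2 ≤ N} := by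
  have := ArithmeticFunction.sum_Ioc_sigma0_eq_sum_div N
  simp only [ArithmeticFunction.sigma_zero_apply, show Ioc 0 N = Icc 1 N from rfl] at this
  rw [this, ← card_filter_mul_le_and_fst_le N N le_rfl]
  congr 1; ext p; simp only [mem_filter, mem_product, mem_Icc]; omega

theorem sum_card_divisors_add_mul_self (N K : ℕ) (hKK : K * K ≤ N)
    (hNK : N < (K + 1) * (K + 1)) :
    ∑ n ∈ Icc 1 N, #n.divisors + K * K = 2 * ∑ a ∈ Icc 1 K, N / a := by
  have hKN : K ≤ N := (Nat.le_mul_self K).trans hKK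
  set P := {p ∈ Icc 1 N ×ˢ Icc 1 N | p.1 * p.2 ≤ N}
  have hunion : {p ∈ P | p.1 ≤ K} ∪ {p ∈ P | p.2 ≤ K} = P := by
    rw [← filter_or, filter_true_of_mem]
    intro p hp
    by_contra! h
    have : (K + 1) * (K + 1) ≤ p.1 * p.2 := Nat.mul_le_mul h.1 h.2
    have := (mem_filter.1 hp).2
    omega
  have hinter : {p ∈ P | p.1 ≤ K} ∩ {p ∈ P | p.2 ≤ K} = Icc 1 K ×ˢ Icc 1 K := by
    rw [← filter_and]
    ext p
    simp only [P, mem_filter, mem_product, mem_Icc]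
    have hmul : p.1 ≤ K → p.2 ≤ K → p.1 * p.2 ≤ N := fun h1 h2 => (Nat.mul_le_mul h1 h2).trans hKK
    constructor
    · omega
    · intro h; have := hmul h.1.2 h.2.2; omega
  have := card_union_add_card_inter {p ∈ P | p.1 ≤ K} {p ∈ P | p.2 ≤ K}
  rw [hunion, hinter, card_product, Nat.card_Icc, add_tsub_cancel_right, filter_filter,
    filter_filter, card_filter_mul_le_and_fst_le N K hKN, card_filter_mul_le_and_snd_le N K hKN,
    ← sum_card_divisors_eq_card_filter_mul_le] at this
  omega

end Nat

namespace Real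

lemma log_sub_log_le_div {a b : ℝ} (ha : 0 < a) (hb : 0 < b) : log b - log a ≤ (b - a) / a := by
  rw [← log_div hb.ne' ha.ne', sub_div, div_self ha.ne']
  exact log_le_sub_one_of_pos (div_pos hb ha)

lemma log_add_one_le_two_mul_sqrt {x : ℝ} (hx : 0 < x) : log x + 1 ≤ 2 * √x := by
  have := log_le_sub_one_of_pos (sqrt_pos.2 hx)
  rw [log_sqrt hx.le] at this
  linarith

lemma mul_log_sub_mul_log_mem_Icc {x y : ℝ} (hy : 0 < y) (hyx : y ≤ x) (hx : 1 ≤ x) :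
    x * log x - y * log y ∈ Set.Icc 0 ((x - y) * (log x + 1)) := by
  have hsplit : x * log x - y * log y = (x - y) * log x + y * (log x - log y) := by ring
  have hlogx : 0 ≤ log x := log_nonneg hx
  have hmono : 0 ≤ log x - log y := sub_nonneg.2 (log_le_log hy hyx)
  have hdiff : y * (log x - log y) ≤ x - y := by
    have := log_sub_log_le_div hy (hy.trans_le hyx)
    rwa [le_div_iff₀ hy, mul_comm] at this
  rw [hsplit]
  constructor <;> nlinarith [sub_nonneg.2 hyx]

end Real

lemma abs_sum_div_sub_mul_harmonic_le (N K : ℕ) :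
    |∑ a ∈ Icc 1 K, ((N / a : ℕ) : ℝ) - N * harmonic K| ≤ K := by
  have hterm (a : ℕ) : |((N / a : ℕ) : ℝ) - N * (a : ℝ)⁻¹| ≤ 1 := by
    rw [← div_eq_mul_inv, ← Nat.floor_div_eq_div (K := ℝ), abs_sub_comm,
      abs_of_nonneg (sub_nonneg.2 (Nat.floor_le (by positivity)))]
    linarith [Nat.lt_floor_add_one ((N : ℝ) / a)]
  calc |∑ a ∈ Icc 1 K, ((N / a : ℕ) : ℝ) - N * harmonic K|
      = |∑ a ∈ Icc 1 K, (((N / a : ℕ) : ℝ) - N * (a : ℝ)⁻¹)| := by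
        simp [harmonic_eq_sum_Icc, mul_sum, sum_sub_distrib]
    _ ≤ ∑ a ∈ Icc 1 K, |((N / a : ℕ) : ℝ) - N * (a : ℝ)⁻¹| := abs_sum_le_sum_abs _ _
    _ ≤ ∑ _a ∈ Icc 1 K, (1 : ℝ) := sum_le_sum fun a _ => hterm a
    _ = K := by simp

lemma abs_harmonic_sub_log_sub_eulerMascheroniConstant_le {K : ℕ} (hK : K ≠ 0) :
    |harmonic K - log K - eulerMascheroniConstant| ≤ 1 / K := by
  have hK' : (0 : ℝ) < K := by positivity
  have hlower : eulerMascheroniConstant < harmonic K - log K := by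
    simpa [eulerMascheroniSeq', hK] using eulerMascheroniConstant_lt_eulerMascheroniSeq' K
  have hupper : harmonic K - log (K + 1) < eulerMascheroniConstant :=
    eulerMascheroniSeq_lt_eulerMascheroniConstant K
  have hstep : log (K + 1) - log K ≤ 1 / K := by
    simpa using log_sub_log_le_div hK' (by positivity : (0 : ℝ) < K + 1)
  rw [abs_le]
  constructor <;> linarith

theorem abs_sum_card_divisors_sub_le {N : ℕ} (hN : N ≠ 0) :
    |∑ n ∈ Icc 1 N, (#n.divisors : ℝ) - (N * log N + (2 * eulerMascheroniConstant - 1) * N)|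
      ≤ 16 * √N := by
  have hK : N.sqrt ≠ 0 := (Nat.sqrt_pos.2 (Nat.pos_of_ne_zero hN)).ne'
  have hKK : (N.sqrt : ℝ) * N.sqrt ≤ N := by exact_mod_cast Nat.sqrt_le N
  have hNle : (N : ℝ) ≤ N.sqrt * N.sqrt + 2 * N.sqrt := by
    have := Nat.sqrt_le_add N
    exact_mod_cast (by omega : N ≤ N.sqrt * N.sqrt + 2 * N.sqrt)
  have hKsqrt : (N.sqrt : ℝ) ≤ √N := Real.nat_sqrt_le_real_sqrt
  have hidentity : ∑ n ∈ Icc 1 N, (#n.divisors : ℝ) + N.sqrt * N.sqrt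
      = 2 * ∑ a ∈ Icc 1 N.sqrt, ((N / a : ℕ) : ℝ) := by
    exact_mod_cast Nat.sum_card_divisors_add_mul_self N N.sqrt (Nat.sqrt_le N) (Nat.lt_succ_sqrt N)
  set K := N.sqrt
  set γ := eulerMascheroniConstant
  have hK1 : (1 : ℝ) ≤ K := by exact_mod_cast Nat.one_le_iff_ne_zero.2 hK
  have hK0 : (0 : ℝ) < K := by positivity
  have hNK3 : (N : ℝ) ≤ 3 * (K * K) := by nlinarith
  have hfloor := abs_le.1 (abs_sum_div_sub_mul_harmonic_le N K)
  have hharmonic : |N * (harmonic K - log K - γ)| ≤ 3 * K := by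
    rw [abs_mul, Nat.abs_cast]
    calc (N : ℝ) * |harmonic K - log K - γ| ≤ N * (1 / K) := by
          gcongr; exact abs_harmonic_sub_log_sub_eulerMascheroniConstant_le hK
      _ ≤ 3 * K := by rw [mul_one_div, div_le_iff₀ hK0]; linarith
  have hlog : (N : ℝ) * (log N - 2 * log K) ∈ Set.Icc (0 : ℝ) (6 * K) := by
    have hpos : (0 : ℝ) < K * K := by positivity
    have h2 : 2 * log K = log (K * K) := by rw [log_mul hK0.ne' hK0.ne']; ring
    have hup := log_sub_log_le_div hpos (hpos.trans_le hKK)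
    rw [h2]
    refine ⟨mul_nonneg (Nat.cast_nonneg N) (sub_nonneg.2 (log_le_log hpos hKK)), ?_⟩
    calc N * (log N - log (K * K)) ≤ N * ((N - K * K) / (K * K)) := by gcongr
      _ ≤ 6 * K := by
        rw [mul_div_assoc', div_le_iff₀ hpos]
        nlinarith
  -- the error is `2 (F - N H_K) + 2N (H_K - log K - γ) - N (log N - 2 log K) + (N - K²)`,
  -- where `F = ∑_{a ≤ K} ⌊N / a⌋`
  rw [abs_le] at hharmonic ⊢
  constructor <;> linarith [hlog.1, hlog.2]

lemma isBigO_sum_card_divisors_floor_sub :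
    (fun x : ℝ => ∑ n ∈ Icc 1 ⌊x⌋₊, (#n.divisors : ℝ) -
        (⌊x⌋₊ * log ⌊x⌋₊ + (2 * eulerMascheroniConstant - 1) * ⌊x⌋₊))
      =O[atTop] fun x => √x := by
  refine IsBigO.of_bound 16 ?_
  filter_upwards [eventually_ge_atTop 1] with x hx
  rw [norm_eq_abs, norm_of_nonneg (sqrt_nonneg x)]
  refine (abs_sum_card_divisors_sub_le ?_).trans ?_
  · exact (Nat.floor_pos.2 hx).ne'
  · gcongr; exact Nat.floor_le (by linarith)

lemma isBigO_mul_log_sub_floor_mul_log_floor :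
    (fun x : ℝ => x * log x - ⌊x⌋₊ * log ⌊x⌋₊) =O[atTop] fun x => √x := by
  refine IsBigO.of_bound 2 ?_
  filter_upwards [eventually_ge_atTop 1] with x hx
  have hfloor : (0 : ℝ) < ⌊x⌋₊ := by exact_mod_cast Nat.floor_pos.2 hx
  have hfrac : x - ⌊x⌋₊ ≤ 1 := by linarith [Nat.lt_floor_add_one x]
  obtain ⟨hlow, hup⟩ := mul_log_sub_mul_log_mem_Icc hfloor (Nat.floor_le (by linarith)) hx
  rw [norm_eq_abs, norm_of_nonneg (sqrt_nonneg x), abs_of_nonneg hlow]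
  calc _ ≤ (x - ⌊x⌋₊) * (log x + 1) := hup
    _ ≤ 1 * (log x + 1) := by gcongr; linarith [log_nonneg hx]
    _ ≤ 2 * √x := by linarith [log_add_one_le_two_mul_sqrt (by linarith : 0 < x)]

lemma isBigO_sub_floor_sqrt : (fun x : ℝ => x - ⌊x⌋₊) =O[atTop] fun x => √x := by
  refine IsBigO.of_bound 1 ?_
  filter_upwards [eventually_ge_atTop 1] with x hx
  rw [norm_eq_abs, norm_of_nonneg (sqrt_nonneg x), one_mul,
    abs_of_nonneg (sub_nonneg.2 (Nat.floor_le (by linarith)))]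
  linarith [Nat.lt_floor_add_one x, one_le_sqrt.2 hx]

theorem dirichlet_divisor_asymptotic :
    (fun x : ℝ => (∑ n ∈ Finset.Icc 1 ⌊x⌋₊, (n.divisors.card : ℝ)) -
        (x * Real.log x + (2 * Real.eulerMascheroniConstant - 1) * x))
      =O[atTop] fun x : ℝ => Real.sqrt x := by
  have hfrac := isBigO_sub_floor_sqrt.const_mul_left (2 * eulerMascheroniConstant - 1)
  refine ((isBigO_sum_card_divisors_floor_sub.sub isBigO_mul_log_sub_floor_mul_log_floor).sub
    hfrac).congr_left fun x => ?_
  ring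
end

section
/- For every fixed natural number f and all N ≥ 2, the shifted divisor sum satisfies ∑_{n≤N} d(n) d(n+f) ≤ C·N (log N)^2 for some constant C depending only on f. -/
/-!
Pairing each divisor `d` of `k` with `k / d` gives `d(k) ≤ 2 #{a ≤ M | a ∣ k}` whenever
`√k ≤ M`; take `M = ⌊√(N + f)⌋`. Expanding the product and swapping the sums, the shifted sum is
at most `4 ∑_{a, b ≤ M} #{n ≤ N | a ∣ n, b ∣ n + f}`. The `n` counted there lie in one residue
class modulo `lcm a b` and exist only if `gcd a b ∣ f`, so each count is at most `N f / (a b) + 1`.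
Summing gives `N f H_M ^ 2 + M ^ 2` with `H_M ≤ 1 + log M = O(log N)`.
-/

open Finset Real

theorem Nat.card_divisors_le_two_mul_card_filter_dvd {n M : ℕ} (hM : n.sqrt ≤ M) :
    #n.divisors ≤ 2 * #{a ∈ Icc 1 M | a ∣ n} := by
  set S := {a ∈ Icc 1 M | a ∣ n}
  have hcover : n.divisors ⊆ S ∪ S.image (n / ·) := by
    intro d hd
    obtain ⟨hdn, hn⟩ := Nat.mem_divisors.mp hd
    have hd0 : 0 < d := Nat.pos_of_dvd_of_pos hdn (Nat.pos_of_ne_zero hn)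
    have hcodiv : n / d ∣ n := Nat.div_dvd_of_dvd hdn
    have hcodiv0 : 0 < n / d := Nat.div_pos (Nat.le_of_dvd (Nat.pos_of_ne_zero hn) hdn) hd0
    by_cases hdM : d ≤ M
    · exact mem_union_left _ (by simp [S, hdM, hdn, Nat.one_le_iff_ne_zero, hd0.ne'])
    · -- `d` and `n / d` cannot both exceed `√n`
      have hsmall : n / d ≤ M := by
        by_contra! h
        have := Nat.lt_succ_sqrt n
        have := Nat.div_mul_cancel hdn
        nlinarith
      refine mem_union_right _ (mem_image.mpr ⟨n / d, ?_, Nat.div_div_self hdn hn⟩)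
      simp [S, hsmall, hcodiv, Nat.one_le_iff_ne_zero, hcodiv0.ne']
  calc #n.divisors ≤ #(S ∪ S.image (n / ·)) := card_le_card hcover
    _ ≤ #S + #(S.image (n / ·)) := card_union_le _ _
    _ ≤ #S + #S := by grw [Finset.card_image_le]
    _ = 2 * #S := (two_mul _).symm

theorem Finset.card_le_div_add_one_of_modEq {s : Finset ℕ} {N m : ℕ} (hs : ∀ n ∈ s, n ≤ N)
    (hmod : ∀ n ∈ s, ∀ n' ∈ s, n ≡ n' [MOD m]) : #s ≤ N / m + 1 := by
  have hinj : Set.InjOn (· / m) s := fun n hn n' hn' hdiv => by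
    rw [← Nat.div_add_mod n m, ← Nat.div_add_mod n' m, hmod n hn n' hn']
    simp only at hdiv
    rw [hdiv]
  have hmaps : ∀ n ∈ s, n / m ∈ range (N / m + 1) := fun n hn =>
    mem_range.mpr (Nat.lt_succ_of_le (Nat.div_le_div_right (hs n hn)))
  simpa using card_le_card_of_injOn _ hmaps hinj

theorem Nat.gcd_dvd_of_dvd_of_dvd_add {a b n f : ℕ} (ha : a ∣ n) (hb : b ∣ n + f) :
    Nat.gcd a b ∣ f :=
  (Nat.dvd_add_right ((Nat.gcd_dvd_left a b).trans ha)).mp ((Nat.gcd_dvd_right a b).trans hb)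

theorem card_filter_dvd_and_dvd_add_le (N f a b : ℕ) :
    #{n ∈ Icc 1 N | a ∣ n ∧ b ∣ n + f} ≤ N / Nat.lcm a b + 1 := by
  refine card_le_div_add_one_of_modEq (fun n hn => (mem_Icc.mp (mem_filter.mp hn).1).2) ?_
  intro n hn n' hn'
  obtain ⟨-, han, hbn⟩ := mem_filter.mp hn
  obtain ⟨-, han', hbn'⟩ := mem_filter.mp hn'
  have hmod {k d : ℕ} (h : d ∣ k) : k ≡ 0 [MOD d] := Nat.modEq_zero_iff_dvd.mpr h
  exact Nat.mod_lcm ((hmod han).trans (hmod han').symm)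
    (Nat.ModEq.add_right_cancel' f ((hmod hbn).trans (hmod hbn').symm))

theorem card_filter_dvd_and_dvd_add_le_div {N f a b : ℕ} (hf : 0 < f) (ha : 0 < a) (hb : 0 < b) :
    (#{n ∈ Icc 1 N | a ∣ n ∧ b ∣ n + f} : ℝ) ≤ N * f / (a * b) + 1 := by
  rcases eq_empty_or_nonempty {n ∈ Icc 1 N | a ∣ n ∧ b ∣ n + f} with hempty | ⟨n, hn⟩
  · rw [hempty, card_empty, Nat.cast_zero]
    positivity
  obtain ⟨-, han, hbn⟩ := mem_filter.mp hn
  -- a solution forces `gcd a b ∣ f`, hence `a * b = gcd a b * lcm a b ≤ f * lcm a b`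
  have hab : (a * b : ℝ) ≤ f * Nat.lcm a b := by
    rw [← Nat.cast_mul, ← Nat.cast_mul, ← Nat.gcd_mul_lcm a b]
    exact_mod_cast Nat.mul_le_mul_right _
      (Nat.le_of_dvd hf (Nat.gcd_dvd_of_dvd_of_dvd_add han hbn))
  have hlcm : (0 : ℝ) < Nat.lcm a b := by exact_mod_cast Nat.lcm_pos ha hb
  calc (#{n ∈ Icc 1 N | a ∣ n ∧ b ∣ n + f} : ℝ) ≤ (N / Nat.lcm a b : ℕ) + 1 := by
        exact_mod_cast card_filter_dvd_and_dvd_add_le N f a b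
    _ ≤ N / Nat.lcm a b + 1 := by gcongr; exact Nat.cast_div_le
    _ ≤ N * f / (a * b) + 1 := by
        gcongr ?_ + 1
        rw [div_le_div_iff₀ hlcm (by positivity), mul_assoc]
        gcongr

theorem sum_card_divisors_mul_card_divisors_add_le {N f M : ℕ} (hM : (N + f).sqrt ≤ M) :
    ∑ n ∈ Icc 1 N, #n.divisors * #(n + f).divisors ≤
      4 * ∑ a ∈ Icc 1 M, ∑ b ∈ Icc 1 M, #{n ∈ Icc 1 N | a ∣ n ∧ b ∣ n + f} := by
  have hdiv : ∀ k ≤ N + f, #k.divisors ≤ 2 * #{a ∈ Icc 1 M | a ∣ k} := fun k hk =>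
    Nat.card_divisors_le_two_mul_card_filter_dvd ((Nat.sqrt_le_sqrt hk).trans hM)
  calc ∑ n ∈ Icc 1 N, #n.divisors * #(n + f).divisors
      ≤ ∑ n ∈ Icc 1 N, (2 * #{a ∈ Icc 1 M | a ∣ n}) * (2 * #{b ∈ Icc 1 M | b ∣ n + f}) := by
        gcongr with n hn
        · exact hdiv n (by linarith [(mem_Icc.mp hn).2])
        · exact hdiv (n + f) (by linarith [(mem_Icc.mp hn).2])
    _ = 4 * ∑ n ∈ Icc 1 N, ∑ a ∈ Icc 1 M, ∑ b ∈ Icc 1 M,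
          if a ∣ n ∧ b ∣ n + f then 1 else 0 := by
        rw [mul_sum]
        refine sum_congr rfl fun n _ => ?_
        rw [card_filter, card_filter, mul_mul_mul_comm, sum_mul_sum]
        simp only [ite_zero_mul_ite_zero, mul_one]
        rfl
    _ = 4 * ∑ a ∈ Icc 1 M, ∑ b ∈ Icc 1 M, #{n ∈ Icc 1 N | a ∣ n ∧ b ∣ n + f} := by
        simp only [card_filter]
        rw [sum_comm]
        exact congrArg _ (sum_congr rfl fun a _ => sum_comm)

theorem Real.one_le_two_mul_log {x : ℝ} (hx : 2 ≤ x) : 1 ≤ 2 * log x := by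
  linarith [log_two_gt_d9, log_le_log two_pos hx]

theorem Real.one_add_log_le_mul_log {x c N : ℝ} (hx : 0 < x) (hc : 1 ≤ c) (hN : 2 ≤ N)
    (hxN : x ≤ c * N) : 1 + log x ≤ (3 + 2 * log c) * log N := by
  have hlogx : log x ≤ log c + log N := by
    rw [← log_mul (by positivity) (by positivity)]
    exact log_le_log hx hxN
  have hlogN := one_le_two_mul_log hN
  nlinarith [log_nonneg hc]

theorem shifted_divisor_sum_upper_bound (f : ℕ) (hf : 0 < f) :
    ∃ C : ℝ, 0 < C ∧ ∀ N : ℕ, 2 ≤ N →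
      (∑ n ∈ Finset.Icc 1 N, (n.divisors.card * (n + f).divisors.card : ℝ)) ≤
        C * N * Real.log N ^ 2 := by
  set c := 3 + 2 * log (f + 1)
  refine ⟨4 * f * c ^ 2 + 16 * (f + 1), by positivity, fun N hN => ?_⟩
  set M := (N + f).sqrt
  have hN2 : (2 : ℝ) ≤ N := by exact_mod_cast hN
  have hM_sq : (M : ℝ) ^ 2 ≤ (f + 1) * N := by
    have : M ^ 2 ≤ N + f := Nat.sqrt_le' _
    have : f ≤ f * N := Nat.le_mul_of_pos_right f (by omega)
    exact_mod_cast (by linarith : M ^ 2 ≤ (f + 1) * N)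
  have hM_pos : 0 < M := Nat.sqrt_pos.mpr (by omega)
  have hharmonic : ∑ a ∈ Icc 1 M, (a : ℝ)⁻¹ ≤ c * log N := by
    have hM_le : (M : ℝ) ≤ (f + 1) * N :=
      le_trans (by exact_mod_cast Nat.le_self_pow two_ne_zero M) hM_sq
    refine le_trans ?_ (one_add_log_le_mul_log (by positivity) (by simp) hN2 hM_le)
    simpa [harmonic_eq_sum_Icc] using harmonic_le_one_add_log M
  calc
    _ = ((∑ n ∈ Icc 1 N, #n.divisors * #(n + f).divisors : ℕ) : ℝ) := by push_cast; rfl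
    _ ≤ 4 * ∑ a ∈ Icc 1 M, ∑ b ∈ Icc 1 M, (#{n ∈ Icc 1 N | a ∣ n ∧ b ∣ n + f} : ℝ) := by
        exact_mod_cast sum_card_divisors_mul_card_divisors_add_le le_rfl
    _ ≤ 4 * ∑ a ∈ Icc 1 M, ∑ b ∈ Icc 1 M, (N * f / (a * b) + 1 : ℝ) := by
        gcongr with a ha b hb
        exact card_filter_dvd_and_dvd_add_le_div hf (mem_Icc.mp ha).1 (mem_Icc.mp hb).1
    _ = 4 * (N * f * (∑ a ∈ Icc 1 M, (a : ℝ)⁻¹) ^ 2 + M ^ 2) := by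
        simp [sum_add_distrib, div_eq_mul_inv, mul_sum, sum_mul, sq]
    _ ≤ 4 * (N * f * (c * log N) ^ 2 + (f + 1) * N * (2 * log N) ^ 2) := by
        have hlog_sq : 1 ≤ (2 * log N) ^ 2 := by nlinarith [one_le_two_mul_log hN2]
        gcongr
        exact hM_sq.trans (le_mul_of_one_le_right (by positivity) hlog_sq)
    _ = _ := by ring
end
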